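/- arXiv:0901.1958 — 3 statements merged into one kernel-verified Lean document; each statement's English description precedes it below -/
import Mathlib

section
/- Let f : ℝ³ → ℝ be a nonnegative measurable function such that f, x ↦ f(x)‖x‖², x ↦ f(x)‖u(x)‖ and x ↦ f(x)‖x‖‖u(x)‖ are integrable, where u : ℝ³ → ℝ³ is measurable. Assume M := ∫ f dx > 0, set x_G := M⁻¹ ∫ f(x) x dx and r(x) := x − x_G, and assume the inertia tensor J (the linear map J a = ∫ f(x)(‖r(x)‖² a − ⟨r(x), a⟩ r(x)) dx) is invertible. Define V_u := M⁻¹ ∫ f(x) u(x) dx, ω_u := J⁻¹(∫ f(x) (r(x) × u(x)) dx), and u_s(x) := V_u + ω_u × r(x). Then for every V_ξ, ω_ξ ∈ ℝ³, ∫ f(x) ⟨u(x) − u_s(x), V_ξ + ω_ξ × r(x)⟩ dx = 0; that is, u − u_s is orthogonal in the weighted inner product with weight f to every rigid velocity field ξ(x) = V_ξ + ω_ξ × r(x). -/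
open MeasureTheory
open scoped RealInnerProductSpace

/-- The cross product on `ℝ³` viewed as `EuclideanSpace ℝ (Fin 3)`. -/
noncomputable def cross3 (a b : EuclideanSpace ℝ (Fin 3)) : EuclideanSpace ℝ (Fin 3) :=
  (WithLp.equiv 2 (Fin 3 → ℝ)).symm
    (crossProduct ((WithLp.equiv 2 (Fin 3 → ℝ)) a) ((WithLp.equiv 2 (Fin 3 → ℝ)) b))

local notation "E3" => EuclideanSpace ℝ (Fin 3)

lemma cross3_apply0 (a b : E3) : cross3 a b 0 = a 1 * b 2 - a 2 * b 1 := by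
  simp [cross3, crossProduct]
lemma cross3_apply1 (a b : E3) : cross3 a b 1 = a 2 * b 0 - a 0 * b 2 := by
  simp [cross3, crossProduct]
lemma cross3_apply2 (a b : E3) : cross3 a b 2 = a 0 * b 1 - a 1 * b 0 := by
  simp [cross3, crossProduct]

lemma inner_cross3_cyclic (a b c : E3) : ⟪a, cross3 b c⟫ = ⟪b, cross3 c a⟫ := by
  simp [PiLp.inner_apply, Fin.sum_univ_three, cross3_apply0, cross3_apply1, cross3_apply2]
  ring

lemma cross3_triple (a b : E3) : cross3 a (cross3 b a) = ⟪a, a⟫ • b - ⟪a, b⟫ • a := by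
  ext i
  fin_cases i <;>
    simp [cross3_apply0, cross3_apply1, cross3_apply2, PiLp.inner_apply, Fin.sum_univ_three,
      PiLp.sub_apply, PiLp.smul_apply, smul_eq_mul, EuclideanSpace.norm_sq_eq, Real.norm_eq_abs,
      sq_abs] <;> ring

lemma cross3_add_left (a b c : E3) : cross3 (a + b) c = cross3 a c + cross3 b c := by
  ext i
  fin_cases i <;>
    simp [cross3_apply0, cross3_apply1, cross3_apply2, PiLp.add_apply] <;> ring

lemma cross3_add_right (a b c : E3) : cross3 a (b + c) = cross3 a b + cross3 a c := by
  ext i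
  fin_cases i <;>
    simp [cross3_apply0, cross3_apply1, cross3_apply2, PiLp.add_apply] <;> ring

lemma cross3_sub_right (a b c : E3) : cross3 a (b - c) = cross3 a b - cross3 a c := by
  ext i
  fin_cases i <;>
    simp [cross3_apply0, cross3_apply1, cross3_apply2, PiLp.sub_apply] <;> ring

lemma cross3_smul_left (t : ℝ) (a b : E3) : cross3 (t • a) b = t • cross3 a b := by
  ext i
  fin_cases i <;>
    simp [cross3_apply0, cross3_apply1, cross3_apply2, PiLp.smul_apply, smul_eq_mul] <;> ring

lemma cross3_smul_right (t : ℝ) (a b : E3) : cross3 a (t • b) = t • cross3 a b := by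
  ext i
  fin_cases i <;>
    simp [cross3_apply0, cross3_apply1, cross3_apply2, PiLp.smul_apply, smul_eq_mul] <;> ring

lemma norm_cross3_le (a b : E3) : ‖cross3 a b‖ ≤ ‖a‖ * ‖b‖ := by
  have h : ⟪cross3 a b, cross3 a b⟫ = ⟪a, a⟫ * ⟪b, b⟫ - ⟪a, b⟫ ^ 2 := by
    simp [PiLp.inner_apply, Fin.sum_univ_three, cross3_apply0, cross3_apply1, cross3_apply2,
      EuclideanSpace.norm_sq_eq, Real.norm_eq_abs, sq_abs]
    ring
  have h2 : ‖cross3 a b‖ ^ 2 ≤ (‖a‖ * ‖b‖) ^ 2 := by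
    have ha := real_inner_self_eq_norm_sq a
    have hb := real_inner_self_eq_norm_sq b
    have hc := real_inner_self_eq_norm_sq (cross3 a b)
    nlinarith [sq_nonneg (⟪a, b⟫ : ℝ)]
  have := norm_nonneg (cross3 a b)
  nlinarith [mul_nonneg (norm_nonneg a) (norm_nonneg b)]

lemma measurable_cross3 {α : Type*} [MeasurableSpace α] {g h : α → E3}
    (hg : Measurable g) (hh : Measurable h) : Measurable fun x => cross3 (g x) (h x) := by
  have hgc : ∀ i : Fin 3, Measurable fun x => g x i := fun i => (measurable_pi_apply i).comp ((WithLp.measurable_ofLp 2 _).comp hg)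
  have hhc : ∀ i : Fin 3, Measurable fun x => h x i := fun i => (measurable_pi_apply i).comp ((WithLp.measurable_ofLp 2 _).comp hh)
  have : Measurable fun x => (cross3 (g x) (h x) : Fin 3 → ℝ) := by
    apply measurable_pi_lambda
    intro i
    fin_cases i
    · simp only [cross3_apply0]; exact ((hgc 1).mul (hhc 2)).sub ((hgc 2).mul (hhc 1))
    · simp only [cross3_apply1]; exact ((hgc 2).mul (hhc 0)).sub ((hgc 0).mul (hhc 2))
    · simp only [cross3_apply2]; exact ((hgc 0).mul (hhc 1)).sub ((hgc 1).mul (hhc 0))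
  exact (WithLp.measurable_toLp 2 _).comp this

lemma my_mono {h : E3 → ℝ} {g : E3 → ℝ} (hg : Integrable g)
    (hm : AEStronglyMeasurable h volume) (hb : ∀ x, ‖h x‖ ≤ g x) : Integrable h :=
  hg.mono' hm (Filter.Eventually.of_forall hb)

lemma my_monoV {h : E3 → E3} {g : E3 → ℝ} (hg : Integrable g)
    (hm : AEStronglyMeasurable h volume) (hb : ∀ x, ‖h x‖ ≤ g x) : Integrable h :=
  hg.mono' hm (Filter.Eventually.of_forall hb)


set_option maxHeartbeats 1000000

/-- The difference `u - u_s` between the velocity and its rigid projection is orthogonal,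
in the inner product weighted by `f`, to every rigid velocity field `ξ = Vξ + ωξ × r`. -/
theorem stmt0
    (f : EuclideanSpace ℝ (Fin 3) → ℝ)
    (u : EuclideanSpace ℝ (Fin 3) → EuclideanSpace ℝ (Fin 3))
    (hf_meas : Measurable f) (hf_nonneg : ∀ x, 0 ≤ f x) (hu_meas : Measurable u)
    (hf_int : Integrable f)
    (hfx2_int : Integrable (fun x => f x * ‖x‖ ^ 2))
    (hfu_int : Integrable (fun x => f x * ‖u x‖))
    (hfxu_int : Integrable (fun x => f x * ‖x‖ * ‖u x‖))
    (M : ℝ) (hM : M = ∫ x, f x) (hMpos : 0 < M)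
    (xG : EuclideanSpace ℝ (Fin 3)) (hxG : xG = M⁻¹ • ∫ x, f x • x)
    (r : EuclideanSpace ℝ (Fin 3) → EuclideanSpace ℝ (Fin 3)) (hr : ∀ x, r x = x - xG)
    (J : EuclideanSpace ℝ (Fin 3) →ₗ[ℝ] EuclideanSpace ℝ (Fin 3))
    (hJ : ∀ a, J a = ∫ x, f x • (‖r x‖ ^ 2 • a - ⟪r x, a⟫ • r x))
    (hJbij : Function.Bijective J)
    (Vu : EuclideanSpace ℝ (Fin 3)) (hVu : Vu = M⁻¹ • ∫ x, f x • u x)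
    (ωu : EuclideanSpace ℝ (Fin 3)) (hωu : J ωu = ∫ x, f x • cross3 (r x) (u x))
    (us : EuclideanSpace ℝ (Fin 3) → EuclideanSpace ℝ (Fin 3))
    (hus : ∀ x, us x = Vu + cross3 ωu (r x)) :
    ∀ Vξ ωξ : EuclideanSpace ℝ (Fin 3),
      ∫ x, f x * ⟪u x - us x, Vξ + cross3 ωξ (r x)⟫ = 0 := by
  have hMne : M ≠ 0 := ne_of_gt hMpos
  -- measurability
  have hreq : r = fun x => x - xG := funext hr
  have hr_meas : Measurable r := by rw [hreq]; exact measurable_id.sub measurable_const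
  have hus_meas : Measurable us := by
    rw [funext hus]; exact measurable_const.add (measurable_cross3 measurable_const hr_meas)
  have hfabs : ∀ x, |f x| = f x := fun x => abs_of_nonneg (hf_nonneg x)
  have hrb : ∀ x, ‖r x‖ ≤ ‖x‖ + ‖xG‖ := fun x => by rw [hr x]; exact norm_sub_le _ _
  -- scalar integrabilities
  have hfx_int : Integrable (fun x : E3 => f x * ‖x‖) := by
    refine my_mono (hf_int.add hfx2_int) ((hf_meas.mul measurable_norm).aestronglyMeasurable) ?_
    intro x
    have h1 : ‖x‖ ≤ 1 + ‖x‖ ^ 2 := by nlinarith [norm_nonneg x, sq_nonneg (‖x‖ - 1)]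
    have := hf_nonneg x
    rw [Real.norm_eq_abs, abs_of_nonneg (mul_nonneg this (norm_nonneg x))]
    simp only [Pi.add_apply]
    nlinarith
  have hfr_int : Integrable (fun x : E3 => f x * ‖r x‖) := by
    refine my_mono (hfx_int.add (hf_int.const_mul ‖xG‖))
      ((hf_meas.mul hr_meas.norm).aestronglyMeasurable) ?_
    intro x
    have := hf_nonneg x
    rw [Real.norm_eq_abs, abs_of_nonneg (mul_nonneg this (norm_nonneg (r x)))]
    have := hrb x
    simp only [Pi.add_apply]
    nlinarith
  have hfr2_int : Integrable (fun x : E3 => f x * ‖r x‖ ^ 2) := by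
    refine my_mono (hfx2_int.add ((hfx_int.const_mul (2 * ‖xG‖)).add
      (hf_int.const_mul (‖xG‖ ^ 2))))
      ((hf_meas.mul (hr_meas.norm.pow_const 2)).aestronglyMeasurable) ?_
    intro x
    have hf := hf_nonneg x
    rw [Real.norm_eq_abs, abs_of_nonneg (mul_nonneg hf (sq_nonneg _))]
    have h1 := hrb x
    have h2 := norm_nonneg (r x)
    have h3 := norm_nonneg x
    have h4 := norm_nonneg xG
    simp only [Pi.add_apply]
    nlinarith [mul_le_mul_of_nonneg_left (pow_le_pow_left₀ h2 h1 2) hf]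
  have hfru_int : Integrable (fun x : E3 => f x * ‖r x‖ * ‖u x‖) := by
    refine my_mono (hfxu_int.add (hfu_int.const_mul ‖xG‖))
      (((hf_meas.mul hr_meas.norm).mul hu_meas.norm).aestronglyMeasurable) ?_
    intro x
    have hf := hf_nonneg x
    rw [Real.norm_eq_abs, abs_of_nonneg (mul_nonneg (mul_nonneg hf (norm_nonneg _)) (norm_nonneg _))]
    have h1 := hrb x
    have h2 := norm_nonneg (u x)
    simp only [Pi.add_apply]
    nlinarith [mul_le_mul_of_nonneg_right (mul_le_mul_of_nonneg_left h1 hf) h2]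
  -- vector integrabilities
  have smul_norm : ∀ (x : E3) (v : E3), ‖f x • v‖ = f x * ‖v‖ := fun x v => by
    rw [norm_smul, Real.norm_eq_abs, hfabs x]
  have int_fx : Integrable (fun x : E3 => f x • x) := by
    refine my_monoV hfx_int ((hf_meas.smul measurable_id).aestronglyMeasurable) fun x => ?_
    rw [smul_norm]
  have int_fr : Integrable (fun x : E3 => f x • r x) := by
    refine my_monoV hfr_int ((hf_meas.smul hr_meas).aestronglyMeasurable) fun x => ?_
    rw [smul_norm]
  have int_fu : Integrable (fun x : E3 => f x • u x) := by
    refine my_monoV hfu_int ((hf_meas.smul hu_meas).aestronglyMeasurable) fun x => ?_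
    rw [smul_norm]
  have int_fus : Integrable (fun x : E3 => f x • us x) := by
    refine my_monoV ((hf_int.const_mul ‖Vu‖).add (hfr_int.const_mul ‖ωu‖))
      ((hf_meas.smul hus_meas).aestronglyMeasurable) fun x => ?_
    rw [smul_norm, hus x]
    have h1 : ‖Vu + cross3 ωu (r x)‖ ≤ ‖Vu‖ + ‖ωu‖ * ‖r x‖ :=
      (norm_add_le _ _).trans (by gcongr; exact norm_cross3_le _ _)
    have := hf_nonneg x
    simp only [Pi.add_apply]
    nlinarith
  have int_fωr : Integrable (fun x : E3 => f x • cross3 ωu (r x)) := by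
    refine my_monoV (hfr_int.const_mul ‖ωu‖)
      ((hf_meas.smul (measurable_cross3 measurable_const hr_meas)).aestronglyMeasurable)
      fun x => ?_
    rw [smul_norm]
    have := norm_cross3_le ωu (r x)
    have := hf_nonneg x
    nlinarith
  have int_fru : Integrable (fun x : E3 => f x • cross3 (r x) (u x)) := by
    refine my_monoV hfru_int
      ((hf_meas.smul (measurable_cross3 hr_meas hu_meas)).aestronglyMeasurable) fun x => ?_
    rw [smul_norm]
    have := norm_cross3_le (r x) (u x)
    have := hf_nonneg x
    nlinarith
  have int_frus : Integrable (fun x : E3 => f x • cross3 (r x) (us x)) := by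
    refine my_monoV ((hfr_int.const_mul ‖Vu‖).add (hfr2_int.const_mul ‖ωu‖))
      ((hf_meas.smul (measurable_cross3 hr_meas hus_meas)).aestronglyMeasurable) fun x => ?_
    rw [smul_norm]
    have h1 : ‖cross3 (r x) (us x)‖ ≤ ‖r x‖ * (‖Vu‖ + ‖ωu‖ * ‖r x‖) := by
      refine (norm_cross3_le _ _).trans ?_
      gcongr
      rw [hus x]
      exact (norm_add_le _ _).trans (by gcongr; exact norm_cross3_le _ _)
    have := hf_nonneg x
    have := norm_nonneg (r x)
    simp only [Pi.add_apply]
    nlinarith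
  have int_fdiff : Integrable (fun x : E3 => f x • (u x - us x)) := by
    have : (fun x : E3 => f x • (u x - us x)) =
        fun x => f x • u x - f x • us x := by funext x; rw [smul_sub]
    rw [this]; exact int_fu.sub int_fus
  have int_fcrossdiff : Integrable (fun x : E3 => f x • cross3 (r x) (u x - us x)) := by
    have : (fun x : E3 => f x • cross3 (r x) (u x - us x)) =
        fun x => f x • cross3 (r x) (u x) - f x • cross3 (r x) (us x) := by
      funext x; rw [cross3_sub_right, smul_sub]
    rw [this]; exact int_fru.sub int_frus
  -- key integral computations
  have h_fx : (∫ x, f x • x) = M • xG := by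
    rw [hxG, smul_smul, mul_inv_cancel₀ hMne, one_smul]
  have h_fr_zero : (∫ x, f x • r x) = 0 := by
    have : (fun x : E3 => f x • r x) = fun x => f x • x - f x • xG := by
      funext x; rw [hr x, smul_sub]
    rw [this, integral_sub int_fx (hf_int.smul_const xG), h_fx, integral_smul_const, ← hM,
      sub_self]
  have h_fu : (∫ x, f x • u x) = M • Vu := by
    rw [hVu, smul_smul, mul_inv_cancel₀ hMne, one_smul]
  -- the continuous linear maps
  let Lω : E3 →L[ℝ] E3 := LinearMap.toContinuousLinearMap
    { toFun := fun v => cross3 ωu v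
      map_add' := fun a b => cross3_add_right ωu a b
      map_smul' := fun t v => cross3_smul_right t ωu v }
  let RV : E3 →L[ℝ] E3 := LinearMap.toContinuousLinearMap
    { toFun := fun v => cross3 v Vu
      map_add' := fun a b => cross3_add_left a b Vu
      map_smul' := fun t v => cross3_smul_left t v Vu }
  have h_fωr : (∫ x, f x • cross3 ωu (r x)) = 0 := by
    have : (fun x : E3 => f x • cross3 ωu (r x)) = fun x => Lω (f x • r x) := by
      funext x
      simp only [Lω, LinearMap.coe_toContinuousLinearMap', LinearMap.coe_mk, AddHom.coe_mk,
        _root_.map_smul]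
    rw [this, ContinuousLinearMap.integral_comp_comm Lω int_fr, h_fr_zero, map_zero]
  have h_fus : (∫ x, f x • us x) = M • Vu := by
    have : (fun x : E3 => f x • us x) = fun x => f x • Vu + f x • cross3 ωu (r x) := by
      funext x; rw [hus x, smul_add]
    rw [this, integral_add (hf_int.smul_const Vu) int_fωr,
      integral_smul_const, ← hM, h_fωr, add_zero]
  have hB : (∫ x, f x • (u x - us x)) = 0 := by
    have : (fun x : E3 => f x • (u x - us x)) = fun x => f x • u x - f x • us x := by
      funext x; rw [smul_sub]
    rw [this, integral_sub int_fu int_fus, h_fu, h_fus, sub_self]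
  have h_frVu : (∫ x, f x • cross3 (r x) Vu) = 0 := by
    have : (fun x : E3 => f x • cross3 (r x) Vu) = fun x => RV (f x • r x) := by
      funext x
      simp only [RV, LinearMap.coe_toContinuousLinearMap', LinearMap.coe_mk, AddHom.coe_mk,
        _root_.map_smul]
    rw [this, ContinuousLinearMap.integral_comp_comm RV int_fr, h_fr_zero, map_zero]
  have h_frtriple : (∫ x, f x • cross3 (r x) (cross3 ωu (r x))) = J ωu := by
    have : (fun x : E3 => f x • cross3 (r x) (cross3 ωu (r x))) =
        fun x => f x • (‖r x‖ ^ 2 • ωu - ⟪r x, ωu⟫ • r x) := by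
      funext x
      rw [cross3_triple, real_inner_self_eq_norm_sq]
    rw [this, ← hJ ωu]
  have int_frVu : Integrable (fun x : E3 => f x • cross3 (r x) Vu) := by
    refine my_monoV (hfr_int.const_mul ‖Vu‖)
      ((hf_meas.smul (measurable_cross3 hr_meas measurable_const)).aestronglyMeasurable)
      fun x => ?_
    rw [smul_norm]
    have := norm_cross3_le (r x) Vu
    have := hf_nonneg x
    nlinarith
  have int_frtriple : Integrable (fun x : E3 => f x • cross3 (r x) (cross3 ωu (r x))) := by
    refine my_monoV (hfr2_int.const_mul ‖ωu‖)
      ((hf_meas.smul (measurable_cross3 hr_meas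
        (measurable_cross3 measurable_const hr_meas))).aestronglyMeasurable) fun x => ?_
    rw [smul_norm]
    have h1 : ‖cross3 (r x) (cross3 ωu (r x))‖ ≤ ‖r x‖ * (‖ωu‖ * ‖r x‖) :=
      (norm_cross3_le _ _).trans (by gcongr; exact norm_cross3_le _ _)
    have := hf_nonneg x
    have := norm_nonneg (r x)
    nlinarith
  have h_frus : (∫ x, f x • cross3 (r x) (us x)) = J ωu := by
    have : (fun x : E3 => f x • cross3 (r x) (us x)) =
        fun x => f x • cross3 (r x) Vu + f x • cross3 (r x) (cross3 ωu (r x)) := by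
      funext x; rw [hus x, cross3_add_right, smul_add]
    rw [this, integral_add int_frVu int_frtriple, h_frVu, h_frtriple, zero_add]
  have hC : (∫ x, f x • cross3 (r x) (u x - us x)) = 0 := by
    have : (fun x : E3 => f x • cross3 (r x) (u x - us x)) =
        fun x => f x • cross3 (r x) (u x) - f x • cross3 (r x) (us x) := by
      funext x; rw [cross3_sub_right, smul_sub]
    rw [this, integral_sub int_fru int_frus, ← hωu, h_frus, sub_self]
  -- conclusion
  intro Vξ ωξ
  have hpt : ∀ x, f x * ⟪u x - us x, Vξ + cross3 ωξ (r x)⟫ =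
      ⟪Vξ, f x • (u x - us x)⟫ + ⟪ωξ, f x • cross3 (r x) (u x - us x)⟫ := by
    intro x
    rw [inner_add_right, mul_add, real_inner_smul_right, real_inner_smul_right,
      real_inner_comm Vξ (u x - us x), inner_cross3_cyclic (u x - us x) ωξ (r x)]
  calc (∫ x, f x * ⟪u x - us x, Vξ + cross3 ωξ (r x)⟫)
      = ∫ x, (⟪Vξ, f x • (u x - us x)⟫ + ⟪ωξ, f x • cross3 (r x) (u x - us x)⟫) := by
        exact integral_congr_ae (Filter.Eventually.of_forall hpt)
    _ = (∫ x, ⟪Vξ, f x • (u x - us x)⟫) + ∫ x, ⟪ωξ, f x • cross3 (r x) (u x - us x)⟫ :=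
        integral_add (int_fdiff.const_inner Vξ) (int_fcrossdiff.const_inner ωξ)
    _ = ⟪Vξ, ∫ x, f x • (u x - us x)⟫ + ⟪ωξ, ∫ x, f x • cross3 (r x) (u x - us x)⟫ := by
        rw [integral_inner int_fdiff, integral_inner int_fcrossdiff]
    _ = 0 := by rw [hB, hC, inner_zero_right, inner_zero_right, add_zero]
end

section
/- Let S ⊆ ℝ³ be a bounded measurable set, c ∈ ℝ³, and ρ : ℝ³ → ℝ measurable with ρ(x) ≥ m > 0 for x ∈ S, and suppose the ball B(c, R) of radius R > 0 centered at c is contained in S. Define J : ℝ³ → ℝ³ by J a = ∫_S ρ(x)(‖x−c‖² a − ⟨x−c, a⟩ (x−c)) dx. Then for every a ∈ ℝ³, ⟨a, J a⟩ ≥ m (8π/15) R⁵ ‖a‖². -/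
open MeasureTheory
open scoped RealInnerProductSpace

set_option linter.unnecessarySeqFocus false
set_option linter.unusedVariables false

open MeasureTheory Metric Set
open scoped RealInnerProductSpace
notation "E3" => EuclideanSpace ℝ (Fin 3)

lemma gamma52 : Real.Gamma (3/2 + 1) = 3/4 * Real.sqrt Real.pi := by
  have h2 : (3:ℝ)/2 = 1/2 + 1 := by norm_num
  rw [Real.Gamma_add_one (by norm_num), h2, Real.Gamma_add_one (by norm_num),
    Real.Gamma_one_half_eq]
  ring

lemma vol_unit_ball : (volume (ball (0:E3) 1)).toReal = 4 * Real.pi / 3 := by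
  rw [EuclideanSpace.volume_ball, Fintype.card_fin]
  have h3 : ((3:ℕ):ℝ)/2 + 1 = 3/2 + 1 := by norm_num
  rw [ENNReal.ofReal_one, one_pow, one_mul, h3, gamma52, ENNReal.toReal_ofReal_eq_iff.mpr]
  · have hs : Real.sqrt Real.pi ^ 3 = Real.pi * Real.sqrt Real.pi := by
      rw [pow_succ, Real.sq_sqrt Real.pi_pos.le]
    rw [hs]
    have : Real.sqrt Real.pi ≠ 0 := by positivity
    field_simp
  · positivity

lemma intOn_ball (g : E3 → ℝ) (hg : Continuous g) (x : E3) (R : ℝ) :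
    IntegrableOn g (ball x R) :=
  (hg.continuousOn.integrableOn_compact (isCompact_closedBall x R)).mono_set
    ball_subset_closedBall

lemma norm_sq_int (R : ℝ) (hR : 0 < R) :
    ∫ x in ball (0:E3) R, ‖x‖^2 = (4 * Real.pi / 5) * R^5 := by
  have hdim : Module.finrank ℝ E3 = 3 := by simp [finrank_euclideanSpace]
  set f : ℝ → ℝ := (Set.Iio R).indicator (fun y => y^2) with hf
  have key := MeasureTheory.integral_fun_norm_addHaar (volume : Measure E3) f
  have h1 : (fun x : E3 => f ‖x‖) = (ball (0:E3) R).indicator (fun x => ‖x‖^2) := by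
    ext x
    by_cases h : ‖x‖ < R <;>
      simp [hf, Set.indicator, h, mem_ball, dist_eq_norm, sub_zero]
  rw [h1, integral_indicator measurableSet_ball, hdim] at key
  rw [key]
  have h2 : ∫ y in Ioi (0:ℝ), y ^ (3-1) • f y = R^5/5 := by
    have hcong : ∀ y ∈ Ioi (0:ℝ), y ^ 2 • f y = (Set.Ioo 0 R).indicator (fun y => y^4) y := by
      intro y hy
      by_cases h : y < R <;>
        simp [hf, Set.indicator, h, hy.out, smul_eq_mul] <;> ring
    rw [setIntegral_congr_fun measurableSet_Ioi hcong, integral_indicator measurableSet_Ioo,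
      Measure.restrict_restrict measurableSet_Ioo,
      Set.inter_eq_left.mpr Ioo_subset_Ioi_self,
      ← integral_Ioc_eq_integral_Ioo, ← intervalIntegral.integral_of_le hR.le,
      integral_pow]
    norm_num
  rw [h2, measureReal_def, vol_unit_ball]
  simp only [smul_eq_mul, nsmul_eq_mul]
  ring

-- change of variables under a linear isometry equiv
lemma cov (e : E3 ≃ₗᵢ[ℝ] E3) (g : E3 → ℝ) (R : ℝ) :
    ∫ x in ball (0:E3) R, g (e x) = ∫ y in ball (0:E3) R, g y := by
  have hpre : e ⁻¹' (ball (0:E3) R) = ball 0 R := by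
    ext x
    simp [mem_ball, dist_eq_norm]
  calc ∫ x in ball (0:E3) R, g (e x)
      = ∫ x in e ⁻¹' (ball (0:E3) R), g (e x) := by rw [hpre]
    _ = ∫ y in ball (0:E3) R, g y :=
        (e.measurePreserving).setIntegral_preimage_emb
          e.toHomeomorph.measurableEmbedding _ _

lemma coord_sq_int (R : ℝ) (i : Fin 3) :
    ∫ x in ball (0:E3) R, (x i)^2 = ∫ y in ball (0:E3) R, (y 0)^2 := by
  have := cov (LinearIsometryEquiv.piLpCongrLeft 2 ℝ ℝ (Equiv.swap 0 i))
    (fun y => (y 0)^2) R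
  rw [← this]
  refine setIntegral_congr_fun measurableSet_ball fun x _ => ?_
  simp only [LinearIsometryEquiv.piLpCongrLeft_apply, Equiv.piCongrLeft'_apply,
    Equiv.symm_symm]
  rw [Equiv.symm_swap, Equiv.swap_apply_left]

lemma coord0_sq_int (R : ℝ) (hR : 0 < R) :
    ∫ y in ball (0:E3) R, (y 0)^2 = (4 * Real.pi / 15) * R^5 := by
  have hnorm : ∀ y : E3, ‖y‖^2 = ∑ i, (y i)^2 := by
    intro y
    rw [EuclideanSpace.norm_eq, Real.sq_sqrt (by positivity)]
    simp [sq_abs]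
  have hcont : ∀ i : Fin 3, Continuous (fun y : E3 => (y i)^2) := by
    intro i
    exact ((continuous_apply i).comp (PiLp.continuous_ofLp 2 _)).pow 2
  have hsplit : ∫ x in ball (0:E3) R, ‖x‖^2
      = ∑ i, ∫ x in ball (0:E3) R, (x i)^2 := by
    rw [← integral_finset_sum _ (fun i _ => intOn_ball _ (hcont i) 0 R)]
    exact setIntegral_congr_fun measurableSet_ball fun x _ => hnorm x
  have h3 : ∑ i : Fin 3, ∫ x in ball (0:E3) R, (x i)^2
      = 3 * ∫ y in ball (0:E3) R, (y 0)^2 := by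
    simp [Fin.sum_univ_three, coord_sq_int R]
    try ring
  have := norm_sq_int R hR
  rw [hsplit, h3] at this
  linarith

lemma ball_int (R : ℝ) (hR : 0 < R) (u : E3) (hu : ‖u‖ = 1) :
    ∫ x in ball (0:E3) R, (‖x‖^2 - ⟪x, u⟫^2) = (8 * Real.pi / 15) * R^5 := by
  -- orthonormal basis with b 0 = u
  obtain ⟨b, hb⟩ := Orthonormal.exists_orthonormalBasis_extension_of_card_eq (𝕜 := ℝ)
    (by simp [finrank_euclideanSpace]) (v := fun _ : Fin 3 => u) (s := {0})
    ⟨fun i => by simpa using hu, fun i j hij =>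
      absurd (Subtype.ext (i.2.trans j.2.symm)) hij⟩
  have hb0 : b 0 = u := hb 0 rfl
  have hinner : ∀ x : E3, ⟪x, u⟫ = (b.repr x) 0 := by
    intro x
    rw [← hb0, ← b.repr.inner_map_map x (b 0), OrthonormalBasis.repr_self]
    simp [EuclideanSpace.inner_single_right]
  have step : ∫ x in ball (0:E3) R, (‖x‖^2 - ⟪x, u⟫^2)
      = ∫ y in ball (0:E3) R, (‖y‖^2 - (y 0)^2) := by
    rw [← cov b.repr (fun y => ‖y‖^2 - (y 0)^2) R]
    refine setIntegral_congr_fun measurableSet_ball fun x _ => ?_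
    simp only []
    rw [hinner x, b.repr.norm_map]
  rw [step]
  have hsub : ∫ y in ball (0:E3) R, (‖y‖^2 - (y 0)^2)
      = (∫ y in ball (0:E3) R, ‖y‖^2) - ∫ y in ball (0:E3) R, (y 0)^2 := by
    refine integral_sub (intOn_ball _ (by continuity) 0 R) ?_
    exact intOn_ball _ (((continuous_apply (0 : Fin 3)).comp (PiLp.continuous_ofLp 2 _)).pow 2) 0 R
  rw [hsub, norm_sq_int R hR, coord0_sq_int R hR]
  ring


lemma transl (c : E3) (R : ℝ) (h : E3 → ℝ) :
    ∫ x in ball c R, h (x - c) = ∫ y in ball (0:E3) R, h y := by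
  have hmp : MeasurePreserving (fun y : E3 => y + c) volume volume :=
    measurePreserving_add_right volume c
  have hpre : (fun y : E3 => y + c) ⁻¹' (ball c R) = ball 0 R := by
    ext y; simp [mem_ball, dist_eq_norm]
  have := hmp.setIntegral_preimage_emb
    (MeasurableEquiv.addRight c).measurableEmbedding (fun x => h (x - c)) (ball c R)
  rw [hpre] at this
  rw [← this]
  simp



/-- If the region `S` contains the ball `B(c, R)` and `ρ ≥ m > 0` on `S`, the inertia
tensor `J` of `ρ` on `S` relative to `c` satisfies `⟨a, J a⟩ ≥ m (8π/15) R⁵ ‖a‖²`. -/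
theorem stmt4
    (S : Set (EuclideanSpace ℝ (Fin 3))) (hSbdd : Bornology.IsBounded S)
    (hSmeas : MeasurableSet S)
    (c : EuclideanSpace ℝ (Fin 3))
    (ρ : EuclideanSpace ℝ (Fin 3) → ℝ) (hρ_meas : Measurable ρ)
    (m : ℝ) (hm : 0 < m) (hρ_lb : ∀ x ∈ S, m ≤ ρ x)
    (R : ℝ) (hR : 0 < R) (hball : Metric.ball c R ⊆ S)
    (hint : IntegrableOn (fun x => ρ x * ‖x - c‖ ^ 2) S)
    (J : EuclideanSpace ℝ (Fin 3) → EuclideanSpace ℝ (Fin 3))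
    (hJ : ∀ a, J a = ∫ x in S, ρ x • (‖x - c‖ ^ 2 • a - ⟪x - c, a⟫ • (x - c))) :
    ∀ a : EuclideanSpace ℝ (Fin 3),
      m * (8 * Real.pi / 15) * R ^ 5 * ‖a‖ ^ 2 ≤ ⟪a, J a⟫ := by
  intro a
  rcases eq_or_ne a 0 with rfl | ha
  · simp [hJ]
  -- the vector field and integrability
  set F : E3 → E3 := fun x => ρ x • (‖x - c‖ ^ 2 • a - ⟪x - c, a⟫ • (x - c)) with hF_def
  have hd : Continuous fun x : E3 => x - c := continuous_id.sub continuous_const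
  have hCcont : Continuous fun x : E3 => ‖x - c‖ ^ 2 • a - ⟪x - c, a⟫ • (x - c) :=
    ((hd.norm.pow 2).smul continuous_const).sub
      (by fun_prop)
  have hFmeas : AEStronglyMeasurable F (volume.restrict S) :=
    (hρ_meas.aestronglyMeasurable.smul hCcont.aestronglyMeasurable)
  have hFbound : ∀ x : E3, ‖F x‖ ≤ 2 * ‖a‖ * |ρ x * ‖x - c‖ ^ 2| := by
    intro x
    have hcs : |⟪x - c, a⟫| ≤ ‖x - c‖ * ‖a‖ := abs_real_inner_le_norm _ _
    have : ‖F x‖ = |ρ x| * ‖‖x - c‖ ^ 2 • a - ⟪x - c, a⟫ • (x - c)‖ := by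
      rw [hF_def]; simp [norm_smul, Real.norm_eq_abs]
    rw [this, abs_mul]
    have h1 : ‖‖x - c‖ ^ 2 • a - ⟪x - c, a⟫ • (x - c)‖ ≤ 2 * (‖a‖ * ‖x - c‖ ^ 2) := by
      refine (norm_sub_le _ _).trans ?_
      rw [norm_smul, norm_smul]
      simp only [Real.norm_eq_abs, abs_pow, abs_norm]
      nlinarith [norm_nonneg (x - c), norm_nonneg a, abs_nonneg (⟪x - c, a⟫)]
    have h2 : |‖x - c‖ ^ 2| = ‖x - c‖ ^ 2 := abs_of_nonneg (by positivity)
    rw [h2]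
    nlinarith [abs_nonneg (ρ x), norm_nonneg a, sq_nonneg ‖x - c‖, abs_nonneg (ρ x)]
  have hFint : IntegrableOn F S := by
    refine Integrable.mono' ((hint.abs).const_mul (2 * ‖a‖)) hFmeas ?_
    exact Filter.Eventually.of_forall fun x => hFbound x
  -- scalar integrand
  set g : E3 → ℝ := fun x => ρ x * (‖x - c‖ ^ 2 * ‖a‖ ^ 2 - ⟪x - c, a⟫ ^ 2) with hg_def
  have hinner_eq : ∀ x : E3, ⟪a, F x⟫ = g x := by
    intro x
    show ⟪a, ρ x • (‖x - c‖ ^ 2 • a - ⟪x - c, a⟫ • (x - c))⟫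
      = ρ x * (‖x - c‖ ^ 2 * ‖a‖ ^ 2 - ⟪x - c, a⟫ ^ 2)
    set d := x - c with hd_def
    simp only [real_inner_smul_right, inner_sub_right]
    rw [real_inner_self_eq_norm_sq, real_inner_comm a d]
    ring
  have hJa : ⟪a, J a⟫ = ∫ x in S, g x := by
    rw [hJ a, ← integral_inner hFint a]
    exact integral_congr_ae (Filter.Eventually.of_forall fun x => hinner_eq x)
  -- nonnegativity on S and lower bound on the ball
  have hh_nonneg : ∀ x : E3, 0 ≤ ‖x - c‖ ^ 2 * ‖a‖ ^ 2 - ⟪x - c, a⟫ ^ 2 := by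
    intro x
    have := real_inner_mul_inner_self_le (x - c) a
    rw [real_inner_self_eq_norm_sq, real_inner_self_eq_norm_sq] at this
    nlinarith [this]
  have hg_int : IntegrableOn g S := by
    have : IntegrableOn (fun x => ⟪a, F x⟫) S := (innerSL ℝ a).integrable_comp hFint
    exact this.congr_fun (fun x _ => hinner_eq x) hSmeas
  set h : E3 → ℝ := fun x => ‖x - c‖ ^ 2 * ‖a‖ ^ 2 - ⟪x - c, a⟫ ^ 2 with hh_def
  have hh_cont : Continuous h :=
    ((hd.norm.pow 2).mul continuous_const).sub (by fun_prop)
  have step1 : ∫ x in ball c R, g x ≤ ∫ x in S, g x := by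
    refine setIntegral_mono_set hg_int ?_ (HasSubset.Subset.eventuallyLE hball)
    refine (ae_restrict_iff' hSmeas).mpr (Filter.Eventually.of_forall fun x hx => ?_)
    have := hρ_lb x hx
    have := hh_nonneg x
    have h0 : (0:ℝ) ≤ ρ x := le_trans hm.le (hρ_lb x hx)
    exact mul_nonneg h0 (hh_nonneg x)
  have hg_int_ball : IntegrableOn g (ball c R) := hg_int.mono_set hball
  have hmh_int : IntegrableOn (fun x => m * h x) (ball c R) :=
    (intOn_ball h hh_cont c R).const_mul m
  have step2 : ∫ x in ball c R, m * h x ≤ ∫ x in ball c R, g x := by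
    refine setIntegral_mono_on hmh_int hg_int_ball measurableSet_ball fun x hx => ?_
    have h1 := hρ_lb x (hball hx)
    have h2 := hh_nonneg x
    have hgx : g x = ρ x * h x := rfl
    rw [hgx]
    exact mul_le_mul_of_nonneg_right h1 h2
  have step3 : ∫ x in ball c R, m * h x = m * ∫ x in ball c R, h x :=
    integral_const_mul m h
  have step4 : ∫ x in ball c R, h x
      = ∫ y in ball (0:E3) R, (‖y‖ ^ 2 * ‖a‖ ^ 2 - ⟪y, a⟫ ^ 2) := by
    exact transl c R (fun y => ‖y‖ ^ 2 * ‖a‖ ^ 2 - ⟪y, a⟫ ^ 2)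
  set u : E3 := ‖a‖⁻¹ • a with hu_def
  have hu : ‖u‖ = 1 := norm_smul_inv_norm ha
  have hua : a = ‖a‖ • u := by
    rw [hu_def, smul_smul, mul_inv_cancel₀ (norm_ne_zero_iff.2 ha), one_smul]
  have step5 : ∫ y in ball (0:E3) R, (‖y‖ ^ 2 * ‖a‖ ^ 2 - ⟪y, a⟫ ^ 2)
      = ‖a‖ ^ 2 * ((8 * Real.pi / 15) * R ^ 5) := by
    have hptwise : ∀ y ∈ ball (0:E3) R, ‖y‖ ^ 2 * ‖a‖ ^ 2 - ⟪y, a⟫ ^ 2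
        = ‖a‖ ^ 2 * (‖y‖ ^ 2 - ⟪y, u⟫ ^ 2) := by
      intro y _
      have hya : ⟪y, a⟫ = ‖a‖ * ⟪y, u⟫ := by
        conv_lhs => rw [hua]
        rw [real_inner_smul_right]
      rw [hya]
      ring
    rw [setIntegral_congr_fun measurableSet_ball hptwise,
      integral_const_mul, ball_int R hR u hu]
  have hfinal : m * (8 * Real.pi / 15) * R ^ 5 * ‖a‖ ^ 2
      = m * (‖a‖ ^ 2 * ((8 * Real.pi / 15) * R ^ 5)) := by ring
  rw [hJa, hfinal, ← step5, ← step4, ← step3]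
  exact le_trans step2 step1
end

section
/- Let τ be an index set, ρ > 0, and let (A_t)_{t∈τ} and, for each n ∈ ℕ, (B_{n,t})_{t∈τ} be families of measurable subsets of ℝ³, each of which satisfies the interior ball condition with radius ρ (every point of the set lies in some closed ball of radius ρ contained in the set). Assume that for every ε > 0 there exists N such that for all n ≥ N and all t ∈ τ, vol(B_{n,t} \ A_t) + vol(A_t \ B_{n,t}) < ε (vol = Lebesgue measure). Then for every σ > 0 there exists N such that for all n ≥ N and all t ∈ τ: B_{n,t} ⊆ {x ∈ ℝ³ : dist(x, A_t) < σ} and A_t ⊆ {x ∈ ℝ³ : dist(x, B_{n,t}) < σ}. -/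
open MeasureTheory
open scoped ENNReal

private lemma center_aux {E : Type*} [NormedAddCommGroup E] [NormedSpace ℝ E]
    (x y : E) (ρ r : ℝ) (hr : 0 < r) (hrρ : r ≤ ρ) (hx : x ∈ Metric.closedBall y ρ) :
    ∃ c : E, dist c x ≤ r ∧ Metric.closedBall c r ⊆ Metric.closedBall y ρ := by
  set d := dist x y with hd
  by_cases h : d ≤ r
  · exact ⟨y, by rwa [dist_comm], Metric.closedBall_subset_closedBall hrρ⟩
  · push_neg at h
    have hd0 : (0:ℝ) < d := hr.trans h
    refine ⟨x + (r/d) • (y - x), ?_, ?_⟩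
    · have : x + (r/d) • (y - x) - x = (r/d) • (y - x) := by abel
      rw [dist_eq_norm, this, norm_smul]
      have hyx : ‖y - x‖ = d := by rw [hd, dist_comm, dist_eq_norm]
      rw [hyx, Real.norm_eq_abs, abs_of_nonneg (by positivity)]
      rw [div_mul_cancel₀ _ hd0.ne']
    · intro z hz
      have hcy : dist (x + (r/d) • (y - x)) y = d - r := by
        have hc : x + (r/d) • (y - x) - y = (1 - r/d) • (x - y) := by
          rw [smul_sub, smul_sub, sub_smul, sub_smul, one_smul, one_smul]; abel
        rw [dist_eq_norm, hc, norm_smul]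
        have hxy : ‖x - y‖ = d := by rw [hd, dist_eq_norm]
        rw [hxy, Real.norm_eq_abs, abs_of_nonneg (by rw [sub_nonneg]; exact (div_le_one hd0).2 h.le)]
        field_simp
      have hzx := Metric.mem_closedBall.1 hz
      have := dist_triangle z (x + (r/d) • (y - x)) y
      have hdρ : d ≤ ρ := Metric.mem_closedBall.1 hx
      simp only [Metric.mem_closedBall]
      linarith

private lemma key_aux (S T : Set (EuclideanSpace ℝ (Fin 3))) (ρ σ : ℝ) (hρ : 0 < ρ) (hσ : 0 < σ)
    (hib : ∀ x ∈ S, ∃ y : EuclideanSpace ℝ (Fin 3),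
      x ∈ Metric.closedBall y ρ ∧ Metric.closedBall y ρ ⊆ S)
    (hvol : volume (S \ T) <
      volume (Metric.ball (0 : EuclideanSpace ℝ (Fin 3)) (min ρ (σ/2) / 2))) :
    S ⊆ {x | EMetric.infEdist x T < ENNReal.ofReal σ} := by
  set r : ℝ := min ρ (σ/2) / 2 with hrdef
  have hr : 0 < r := by positivity
  have hrρ : r ≤ ρ := by
    rw [hrdef]; nlinarith [min_le_left ρ (σ/2)]
  intro x hx
  by_contra hcon
  simp only [Set.mem_setOf_eq, not_lt] at hcon
  obtain ⟨y, hxy, hyS⟩ := hib x hx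
  obtain ⟨c, hcx, hsub⟩ := center_aux x y ρ r hr hrρ hxy
  have hball : Metric.ball c r ⊆ S \ T := by
    intro z hz
    refine ⟨hyS (hsub (Metric.ball_subset_closedBall hz)), fun hzT => ?_⟩
    have h1 : EMetric.infEdist x T ≤ edist x z := EMetric.infEdist_le_edist_of_mem hzT
    have h2 : dist x z < σ := by
      have := Metric.mem_ball.1 hz
      have : dist x z ≤ dist x c + dist c z := dist_triangle x c z
      have hrσ : 2 * r ≤ σ / 2 := by rw [hrdef]; nlinarith [min_le_right ρ (σ/2)]
      rw [dist_comm c z] at this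
      have hcz := Metric.mem_ball.1 hz
      rw [dist_comm x c] at this
      linarith
    have h3 : edist x z < ENNReal.ofReal σ := by
      rw [edist_dist]; exact ENNReal.ofReal_lt_ofReal_iff_of_nonneg dist_nonneg |>.2 h2
    exact absurd h3 (not_lt.2 (hcon.trans h1))
  have hle : volume (Metric.ball (0 : EuclideanSpace ℝ (Fin 3)) r) ≤ volume (S \ T) := by
    rw [← Measure.addHaar_ball_center volume c r]
    exact measure_mono hball
  exact absurd (hle.trans_lt hvol) (lt_irrefl _)

/-- If the families `(A_t)` and `(B_{n,t})` of measurable subsets of `ℝ³` all satisfy the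
interior ball condition with radius `ρ > 0`, and the symmetric-difference volumes
`vol(B_{n,t} \ A_t) + vol(A_t \ B_{n,t})` tend to `0` uniformly in `t`, then for every
`σ > 0`, eventually (uniformly in `t`) `B_{n,t}` is contained in the `σ`-neighborhood of
`A_t` and `A_t` in the `σ`-neighborhood of `B_{n,t}`. -/
theorem stmt8
    {τ : Type*} (ρ : ℝ) (hρ : 0 < ρ)
    (A : τ → Set (EuclideanSpace ℝ (Fin 3)))
    (B : ℕ → τ → Set (EuclideanSpace ℝ (Fin 3)))
    (hAmeas : ∀ t, MeasurableSet (A t)) (hBmeas : ∀ n t, MeasurableSet (B n t))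
    (hibA : ∀ t, ∀ x ∈ A t, ∃ y : EuclideanSpace ℝ (Fin 3),
      x ∈ Metric.closedBall y ρ ∧ Metric.closedBall y ρ ⊆ A t)
    (hibB : ∀ n t, ∀ x ∈ B n t, ∃ y : EuclideanSpace ℝ (Fin 3),
      x ∈ Metric.closedBall y ρ ∧ Metric.closedBall y ρ ⊆ B n t)
    (hconv : ∀ ε : ℝ, 0 < ε → ∃ N : ℕ, ∀ n ≥ N, ∀ t,
      volume (B n t \ A t) + volume (A t \ B n t) < ENNReal.ofReal ε) :
    ∀ σ : ℝ, 0 < σ → ∃ N : ℕ, ∀ n ≥ N, ∀ t,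
      B n t ⊆ {x | EMetric.infEdist x (A t) < ENNReal.ofReal σ} ∧
      A t ⊆ {x | EMetric.infEdist x (B n t) < ENNReal.ofReal σ} := by
  intro σ hσ
  set r : ℝ := min ρ (σ/2) / 2 with hrdef
  have hr : 0 < r := by positivity
  set v : ℝ≥0∞ := volume (Metric.ball (0 : EuclideanSpace ℝ (Fin 3)) r) with hvdef
  have hv0 : 0 < v := Metric.measure_ball_pos volume _ hr
  have hvtop : v ≠ ⊤ := (measure_ball_lt_top).ne
  have hvt : 0 < v.toReal := ENNReal.toReal_pos hv0.ne' hvtop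
  obtain ⟨N, hN⟩ := hconv v.toReal hvt
  have hvor : ENNReal.ofReal v.toReal = v := ENNReal.ofReal_toReal hvtop
  refine ⟨N, fun n hn t => ?_⟩
  have h := hN n hn t
  rw [hvor] at h
  constructor
  · exact key_aux (B n t) (A t) ρ σ hρ hσ (hibB n t)
      ((le_add_right le_rfl).trans_lt h)
  · exact key_aux (A t) (B n t) ρ σ hρ hσ (hibA t)
      ((le_add_left le_rfl).trans_lt h)
end
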